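/- If L is the unique bidegree (1,0) curve meeting two distinct disjoint twistor fibers, then the unique bidegree (0,1) curve meeting both twistor fibers is j(L). -/
import Mathlib


open scoped BigOperators

noncomputable section

/-- The complex projective plane. -/
abbrev P2 := Projectivization ℂ (Fin 3 → ℂ)

/-- The bilinear incidence pairing. -/
def dotc (v w : Fin 3 → ℂ) : ℂ := ∑ i, v i * w i

/-- The flag threefold `F = {(p,ℓ) ∈ ℙ² × ℙ² : pℓ = 0}`. -/
def FlagThreefold : Set (P2 × P2) := {x | dotc x.1.rep x.2.rep = 0}

/-- The bidegree `(1,1)` curve `L_{q,m} = {(p,ℓ) ∈ F : pm = 0, qℓ = 0}`. -/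
def conicL (q m : Fin 3 → ℂ) : Set (P2 × P2) :=
  {x | x ∈ FlagThreefold ∧ dotc x.1.rep m = 0 ∧ dotc q x.2.rep = 0}

/-- The fiber of `π₁(p,ℓ) = p` over `a`, a curve of bidegree `(0,1)`. -/
def fiber1 (a : P2) : Set (P2 × P2) := {x | x ∈ FlagThreefold ∧ x.1 = a}

/-- The fiber of `π₂(p,ℓ) = ℓ` over `b`, a curve of bidegree `(1,0)`. -/
def fiber2 (b : P2) : Set (P2 × P2) := {x | x ∈ FlagThreefold ∧ x.2 = b}

/-- Coordinatewise complex conjugation on `ℙ²`. -/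
def conjP (P : P2) : P2 :=
  Projectivization.mk ℂ (fun i => starRingEnd ℂ (P.rep i))
    (fun h => P.rep_nonzero (funext fun i => by simpa using congrFun h i))

/-- The twistor involution `j(p,ℓ) = (ℓ̄, p̄)`. -/
def jmap (x : P2 × P2) : P2 × P2 := (conjP x.2, conjP x.1)

/-- The cross product of homogeneous coordinate vectors. -/
def cross3 (v w : Fin 3 → ℂ) : Fin 3 → ℂ :=
  ![v 1 * w 2 - v 2 * w 1, v 2 * w 0 - v 0 * w 2, v 0 * w 1 - v 1 * w 0]

notation "cj" v => (fun i => starRingEnd ℂ (v i))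

lemma cj_ne {v : Fin 3 → ℂ} (hv : v ≠ 0) : (cj v) ≠ 0 := fun h => hv (funext fun i => by simpa using congrFun h i)

lemma dotc_smul (a b : ℂ) (u w : Fin 3 → ℂ) : dotc (a • u) (b • w) = a * b * dotc u w := by
  simp [dotc, Finset.mul_sum]
  exact Finset.sum_congr rfl fun i _ => by ring

lemma dotc_conj (u w : Fin 3 → ℂ) : dotc (cj u) (cj w) = starRingEnd ℂ (dotc u w) := by
  simp [dotc]

lemma dotc_comm (u w : Fin 3 → ℂ) : dotc u w = dotc w u := by
  simp [dotc, mul_comm]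

lemma cross3_conj (v w : Fin 3 → ℂ) :
    cross3 (cj v) (cj w) = (cj (cross3 v w)) := by
  funext i
  fin_cases i <;> simp [cross3]

lemma mk_cj_eq {u w : Fin 3 → ℂ} (hu : u ≠ 0) (hw : w ≠ 0)
    (h : Projectivization.mk ℂ u hu = Projectivization.mk ℂ w hw) :
    Projectivization.mk ℂ (cj u) (cj_ne hu) = Projectivization.mk ℂ (cj w) (cj_ne hw) := by
  rw [Projectivization.mk_eq_mk_iff'] at h ⊢
  obtain ⟨a, ha⟩ := h
  exact ⟨starRingEnd ℂ a, funext fun i => by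
    have := congrFun ha i; simp at this ⊢; rw [← this]; simp⟩

lemma conjP_mk {v : Fin 3 → ℂ} (hv : v ≠ 0) :
    conjP (Projectivization.mk ℂ v hv) = Projectivization.mk ℂ (cj v) (cj_ne hv) := by
  unfold conjP
  exact mk_cj_eq _ _ (Projectivization.mk_rep _)

lemma conjP_conjP (P : P2) : conjP (conjP P) = P := by
  conv_lhs => rw [← Projectivization.mk_rep P]
  rw [conjP_mk, conjP_mk]
  conv_rhs => rw [← Projectivization.mk_rep P]
  rw [Projectivization.mk_eq_mk_iff']
  exact ⟨1, funext fun i => by simp⟩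

lemma rep_conjP (P : P2) : ∃ a : ℂˣ, (conjP P).rep = (a : ℂ) • (cj P.rep) := by
  obtain ⟨a, ha⟩ := (Projectivization.mk_eq_mk_iff ℂ ((conjP P).rep) (cj P.rep)
    (Projectivization.rep_nonzero _) (cj_ne (Projectivization.rep_nonzero P))).1
    (Projectivization.mk_rep (conjP P))
  exact ⟨a, ha.symm⟩

lemma flag_jmap {x : P2 × P2} (h : x ∈ FlagThreefold) : jmap x ∈ FlagThreefold := by
  obtain ⟨a, ha⟩ := rep_conjP x.2
  obtain ⟨b, hb⟩ := rep_conjP x.1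
  have h0 : dotc x.1.rep x.2.rep = 0 := h
  show dotc (conjP x.2).rep (conjP x.1).rep = 0
  rw [ha, hb, dotc_smul, dotc_conj, dotc_comm, h0]
  simp

lemma cross3_ne {v w : Fin 3 → ℂ} (hv : v ≠ 0) (hw : w ≠ 0)
    (hne : Projectivization.mk ℂ v hv ≠ Projectivization.mk ℂ w hw) :
    cross3 v w ≠ 0 := by
  intro h
  apply hne
  have e0 := congrFun h 0
  have e1 := congrFun h 1
  have e2 := congrFun h 2
  simp [cross3, sub_eq_zero] at e0 e1 e2
  have key : ∀ i k : Fin 3, v k * w i = v i * w k := by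
    intro i k
    fin_cases i <;> fin_cases k <;> simp <;>
      first
      | linear_combination e0 | linear_combination -e0
      | linear_combination e1 | linear_combination -e1
      | linear_combination e2 | linear_combination -e2
  obtain ⟨i, hi⟩ : ∃ i, w i ≠ 0 := Function.ne_iff.1 hw
  obtain ⟨k, hk⟩ : ∃ k, v k ≠ 0 := Function.ne_iff.1 hv
  have hvi : v i ≠ 0 := by
    intro hz
    apply hk
    have := key i k
    rw [hz, zero_mul] at this
    rcases mul_eq_zero.1 this with h' | h'
    · exact h'
    · exact absurd h' hi
  rw [Projectivization.mk_eq_mk_iff']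
  refine ⟨v i / w i, funext fun k => ?_⟩
  show v i / w i * w k = v k
  rw [div_mul_eq_mul_div, div_eq_iff hi]
  exact (key i k).symm

/-- If `L = π₂⁻¹([q × q'])` is the unique bidegree `(1,0)` curve meeting two distinct
disjoint twistor fibers `L_{q,q̄}` and `L_{q',q̄'}`, then the unique bidegree `(0,1)`
curve meeting both, namely `R = π₁⁻¹([q̄ × q̄'])`, is exactly `j(L)`. -/
theorem j_image_of_line_is_coline
    (q q' : Fin 3 → ℂ) (hq : q ≠ 0) (hq' : q' ≠ 0)
    (hne : Projectivization.mk ℂ q hq ≠ Projectivization.mk ℂ q' hq')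
    (hdisj : conicL q (fun i => starRingEnd ℂ (q i)) ∩
        conicL q' (fun i => starRingEnd ℂ (q' i)) = ∅) :
    ∃ (h2 : cross3 q q' ≠ 0)
      (h1 : cross3 (fun i => starRingEnd ℂ (q i)) (fun i => starRingEnd ℂ (q' i)) ≠ 0),
      jmap '' fiber2 (Projectivization.mk ℂ (cross3 q q') h2) =
        fiber1 (Projectivization.mk ℂ
          (cross3 (fun i => starRingEnd ℂ (q i)) (fun i => starRingEnd ℂ (q' i))) h1) := by
  clear hdisj
  have h2 : cross3 q q' ≠ 0 := cross3_ne hq hq' hne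
  have hnec : Projectivization.mk ℂ (cj q) (cj_ne hq) ≠ Projectivization.mk ℂ (cj q') (cj_ne hq') := by
    intro h
    apply hne
    rw [Projectivization.mk_eq_mk_iff'] at h ⊢
    obtain ⟨a, ha⟩ := h
    refine ⟨starRingEnd ℂ a, funext fun i => ?_⟩
    have := congrArg (starRingEnd ℂ) (congrFun ha i)
    simpa using this
  have h1 : cross3 (cj q) (cj q') ≠ 0 := cross3_ne (cj_ne hq) (cj_ne hq') hnec
  refine ⟨h2, h1, ?_⟩
  set b : P2 := Projectivization.mk ℂ (cross3 q q') h2 with hb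
  set a : P2 := Projectivization.mk ℂ (cross3 (cj q) (cj q')) h1 with hadef
  have hab : conjP b = a := by
    rw [hb, conjP_mk, hadef, Projectivization.mk_eq_mk_iff']
    exact ⟨1, by rw [cross3_conj]; simp⟩
  ext x
  constructor
  · rintro ⟨y, ⟨hflag, hy2⟩, rfl⟩
    exact ⟨flag_jmap hflag, by simp only [jmap]; rw [hy2, hab]⟩
  · rintro ⟨hflag, hx1⟩
    refine ⟨jmap x, ⟨flag_jmap hflag, ?_⟩, ?_⟩
    · show conjP x.1 = b
      rw [hx1, ← hab, conjP_conjP]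
    · show (conjP (conjP x.1), conjP (conjP x.2)) = x
      rw [conjP_conjP, conjP_conjP]
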